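/- arXiv:2407.21555 — 3 statements merged into one kernel-verified Lean document; each statement's English description precedes it below -/
import Mathlib

section
/- Assume A_{II} = 0 for all I ∈ V (simple graph). Fix J₀ ∈ V, an integer r > N, and a ∈ ℚ_p with B' = {x : |x−a|_p ≤ p^{-r}} ⊆ B_{J₀}, and let f = 1_{B'} be the indicator function of B'. Then for every x₀ ∈ B_{J₀} \ B': the integral operator ℒ with kernel L(x,y) = p^N Σ_{I,J∈V}(A_{IJ} − γ_I δ_{IJ}) 1_{B_I}(x) 1_{B_J}(y) satisfies ℒf(x₀) = −p^{N−r} γ_{J₀}, whereas the Zúñiga Laplacian satisfies 𝕃f(x₀) = 0. In particular ℒ ≠ 𝕃. -/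
open MeasureTheory Set
open scoped ENNReal NNReal

noncomputable section

/-- The closed ball `{x : ℚ_p | |x - I|_p ≤ p^(-N)}`. -/
def pBall (p : ℕ) [Fact p.Prime] (N : ℤ) (I : ℚ_[p]) : Set ℚ_[p] :=
  {x : ℚ_[p] | ‖x - I‖ ≤ (p : ℝ) ^ (-N)}

/-- The indicator function of the ball `pBall p N I`, as a `ℂ`-valued function. -/
def indic (p : ℕ) [Fact p.Prime] (N : ℤ) (I : ℚ_[p]) : ℚ_[p] → ℂ :=
  (pBall p N I).indicator 1

/-- `K_N`, the disjoint union of the balls around the vertices. -/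
def KN (p : ℕ) [Fact p.Prime] (N : ℤ) (V : Finset ℚ_[p]) : Set ℚ_[p] :=
  ⋃ I ∈ V, pBall p N I

/-- The kernel `A(x,y) = p^N ∑_{I,J ∈ V} A_{IJ} 1_{B_I}(x) 1_{B_J}(y)`. -/
def zker (p : ℕ) [Fact p.Prime] (N : ℤ) (V : Finset ℚ_[p]) (A : ℚ_[p] → ℚ_[p] → ℂ)
    (x y : ℚ_[p]) : ℂ :=
  (p : ℂ) ^ N * ∑ I ∈ V, ∑ J ∈ V, A I J * indic p N I x * indic p N J y

/-- The degree `γ_I = ∑_{J ∈ V} A_{IJ}`. -/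
def deg (p : ℕ) [Fact p.Prime] (V : Finset ℚ_[p]) (A : ℚ_[p] → ℚ_[p] → ℂ) (I : ℚ_[p]) : ℂ :=
  ∑ J ∈ V, A I J

/-- The degree function `γ(x) = ∑_{I ∈ V} γ_I 1_{B_I}(x)`. -/
def degFun (p : ℕ) [Fact p.Prime] (N : ℤ) (V : Finset ℚ_[p]) (A : ℚ_[p] → ℚ_[p] → ℂ)
    (x : ℚ_[p]) : ℂ :=
  ∑ I ∈ V, deg p V A I * indic p N I x

/-- The Zúñiga operator `𝒜u(x) = ∫_{K_N} A(x,y) u(y) dμ(y)`. -/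
def zop (p : ℕ) [Fact p.Prime] (N : ℤ) (V : Finset ℚ_[p]) (A : ℚ_[p] → ℚ_[p] → ℂ)
    [MeasurableSpace ℚ_[p]] (μ : Measure ℚ_[p]) (u : ℚ_[p] → ℂ) (x : ℚ_[p]) : ℂ :=
  ∫ y in KN p N V, zker p N V A x y * u y ∂μ

/-- The Zúñiga Laplacian `𝕃u = 𝒜u - γ·u`. -/
def lapOp (p : ℕ) [Fact p.Prime] (N : ℤ) (V : Finset ℚ_[p]) (A : ℚ_[p] → ℚ_[p] → ℂ)
    [MeasurableSpace ℚ_[p]] (μ : Measure ℚ_[p]) (u : ℚ_[p] → ℂ) (x : ℚ_[p]) : ℂ :=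
  zop p N V A μ u x - degFun p N V A x * u x

open scoped Classical in
/-- The kernel `L(x,y) = p^N ∑_{I,J ∈ V} (A_{IJ} - γ_I δ_{IJ}) 1_{B_I}(x) 1_{B_J}(y)`. -/
def lker (p : ℕ) [Fact p.Prime] (N : ℤ) (V : Finset ℚ_[p]) (A : ℚ_[p] → ℚ_[p] → ℂ)
    (x y : ℚ_[p]) : ℂ :=
  (p : ℂ) ^ N * ∑ I ∈ V, ∑ J ∈ V,
    (A I J - if I = J then deg p V A I else 0) * indic p N I x * indic p N J y

/-- The integral operator `ℒu(x) = ∫_{K_N} L(x,y) u(y) dμ(y)`. -/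
def lop (p : ℕ) [Fact p.Prime] (N : ℤ) (V : Finset ℚ_[p]) (A : ℚ_[p] → ℚ_[p] → ℂ)
    [MeasurableSpace ℚ_[p]] (μ : Measure ℚ_[p]) (u : ℚ_[p] → ℂ) (x : ℚ_[p]) : ℂ :=
  ∫ y in KN p N V, lker p N V A x y * u y ∂μ

/-- Pairwise disjointness of the vertex balls. -/
def BallsDisjoint (p : ℕ) [Fact p.Prime] (N : ℤ) (V : Finset ℚ_[p]) : Prop :=
  (V : Set ℚ_[p]).Pairwise fun I J => Disjoint (pBall p N I) (pBall p N J)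

/-!
At `x₀ ∈ B_{J₀}` the balls being disjoint makes both kernels constant on `B' ⊆ B_{J₀}`:
`A(x₀, y) = p^N A_{J₀J₀} = 0` and `L(x₀, y) = p^N (A_{J₀J₀} - γ_{J₀}) = -p^N γ_{J₀}`. Hence
`𝒜f(x₀) = 0`, and `γ(x₀) f(x₀) = 0` because `x₀ ∉ B'`, so `𝕃f(x₀) = 0`; whereas
`ℒf(x₀) = -p^N γ_{J₀} μ(B') = -p^{N-r} γ_{J₀}`. The Haar measure of a ball of radius `p^{-k}` is
`p^{-k}`, because it is the disjoint union of the `p` translates `j p^k + B(0, p^{-(k+1)})`,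
`0 ≤ j < p`, one for each residue class mod `p`.
-/

open Metric

namespace Padic

variable {p : ℕ} [Fact p.Prime]

lemma norm_natCast_sub_natCast_eq_one {i j : ℕ} (hi : i < p) (hj : j < p) (hij : i ≠ j) :
    ‖(i : ℚ_[p]) - j‖ = 1 := by
  have hcast : (i : ℚ_[p]) - j = ((i - j : ℤ) : ℚ_[p]) := by push_cast; ring
  rw [hcast]
  refine le_antisymm (norm_int_le_one _) (not_lt.1 fun hlt => hij ?_)
  have := Int.eq_zero_of_abs_lt_dvd (norm_intCast_lt_one_iff.1 hlt) (by rw [abs_lt]; omega)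
  omega

lemma exists_lt_norm_sub_natCast_le (z : ℚ_[p]) (hz : ‖z‖ ≤ 1) :
    ∃ j < p, ‖z - j‖ ≤ (p : ℝ) ^ (-1 : ℤ) := by
  set z' : ℤ_[p] := ⟨z, hz⟩
  obtain ⟨j, hjp, hj⟩ := PadicInt.exists_mem_range z'
  rw [IsLocalRing.mem_maximalIdeal, PadicInt.mem_nonunits, PadicInt.norm_def, PadicInt.coe_sub,
    PadicInt.coe_natCast] at hj
  refine ⟨j, hjp, (norm_le_pow_iff_norm_lt_pow_add_one _ _).2 ?_⟩
  rwa [neg_add_cancel, zpow_zero]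

lemma closedBall_zero_zpow_eq_biUnion (k : ℤ) :
    closedBall (0 : ℚ_[p]) ((p : ℝ) ^ (-k)) =
      ⋃ j ∈ Finset.range p,
        closedBall ((j : ℚ_[p]) * (p : ℚ_[p]) ^ k) ((p : ℝ) ^ (-(k + 1))) := by
  have hp : (p : ℚ_[p]) ≠ 0 := by exact_mod_cast (Fact.out : p.Prime).ne_zero
  have hp' : (0 : ℝ) < p := by exact_mod_cast (Fact.out : p.Prime).pos
  ext x
  simp only [mem_closedBall, dist_eq_norm, sub_zero, Set.mem_iUnion, Finset.mem_range,
    exists_prop]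
  constructor
  · intro hx
    obtain ⟨j, hjp, hj⟩ := exists_lt_norm_sub_natCast_le (x * (p : ℚ_[p]) ^ (-k)) <| by
      rw [norm_mul, norm_p_zpow, neg_neg, ← le_div_iff₀ (zpow_pos hp' k), one_div, ← zpow_neg]
      exact hx
    refine ⟨j, hjp, ?_⟩
    have hscale :
        x - j * (p : ℚ_[p]) ^ k = (x * (p : ℚ_[p]) ^ (-k) - j) * (p : ℚ_[p]) ^ k := by
      rw [sub_mul, mul_assoc, ← zpow_add₀ hp, neg_add_cancel, zpow_zero, mul_one]
    rw [hscale, norm_mul, norm_p_zpow, neg_add, zpow_add₀ hp'.ne', mul_comm ((p : ℝ) ^ (-k))]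
    exact mul_le_mul_of_nonneg_right hj (zpow_nonneg hp'.le _)
  · rintro ⟨j, -, hj⟩
    have hcenter : ‖(j : ℚ_[p]) * (p : ℚ_[p]) ^ k‖ ≤ (p : ℝ) ^ (-k) := by
      rw [norm_mul, norm_p_zpow]
      exact mul_le_of_le_one_left (zpow_nonneg hp'.le _)
        (IsUltrametricDist.norm_natCast_le_one ℚ_[p] j)
    have hradius : (p : ℝ) ^ (-(k + 1)) ≤ (p : ℝ) ^ (-k) :=
      zpow_le_zpow_right₀ (by exact_mod_cast (Fact.out : p.Prime).one_le) (by omega)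
    calc ‖x‖ = ‖(x - j * (p : ℚ_[p]) ^ k) + j * (p : ℚ_[p]) ^ k‖ := by
          rw [sub_add_cancel]
      _ ≤ max ‖x - j * (p : ℚ_[p]) ^ k‖ ‖(j : ℚ_[p]) * (p : ℚ_[p]) ^ k‖ :=
          nonarchimedean _ _
      _ ≤ (p : ℝ) ^ (-k) := max_le (hj.trans hradius) hcenter

lemma pairwiseDisjoint_closedBall_natCast_mul_zpow (k : ℤ) :
    (Finset.range p : Set ℕ).PairwiseDisjoint
      fun j => closedBall ((j : ℚ_[p]) * (p : ℚ_[p]) ^ k) ((p : ℝ) ^ (-(k + 1))) := by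
  intro i hi j hj hij
  simp only [Finset.coe_range, Set.mem_Iio] at hi hj
  refine (IsUltrametricDist.closedBall_eq_or_disjoint _ _ _).resolve_left fun heq => ?_
  have hmem := heq ▸ mem_closedBall_self (x := (j : ℚ_[p]) * (p : ℚ_[p]) ^ k)
    (zpow_nonneg (Nat.cast_nonneg p) _)
  rw [mem_closedBall, dist_eq_norm, ← sub_mul, norm_mul, norm_p_zpow,
    norm_natCast_sub_natCast_eq_one hj hi (Ne.symm hij), one_mul] at hmem
  exact absurd hmem (not_le.2 (zpow_lt_zpow_right₀
    (by exact_mod_cast (Fact.out : p.Prime).one_lt) (by omega)))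

variable [MeasurableSpace ℚ_[p]] [BorelSpace ℚ_[p]] (μ : Measure ℚ_[p]) [μ.IsAddHaarMeasure]

lemma addHaar_real_closedBall_zero_zpow_eq_mul (k : ℤ) :
    μ.real (closedBall 0 ((p : ℝ) ^ (-k))) =
      p * μ.real (closedBall 0 ((p : ℝ) ^ (-(k + 1)))) := by
  rw [closedBall_zero_zpow_eq_biUnion, measureReal_biUnion_finset
    (pairwiseDisjoint_closedBall_natCast_mul_zpow k) (fun _ _ => measurableSet_closedBall)
    (fun _ _ => measure_closedBall_lt_top.ne)]
  simp only [measureReal_def, Measure.addHaar_closedBall_center μ _ ((p : ℝ) ^ (-(k + 1))),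
    Finset.sum_const, Finset.card_range, nsmul_eq_mul]

lemma addHaar_real_closedBall_zpow (x : ℚ_[p]) (k : ℤ) :
    μ.real (closedBall x ((p : ℝ) ^ (-k))) = (p : ℝ) ^ (-k) * μ.real (closedBall 0 1) := by
  have hp : (p : ℝ) ≠ 0 := by exact_mod_cast (Fact.out : p.Prime).ne_zero
  have hstep (k : ℤ) : (p : ℝ) ^ (-k) = p * (p : ℝ) ^ (-(k + 1)) := by
    rw [neg_add, zpow_add₀ hp, zpow_neg_one, mul_left_comm, mul_inv_cancel₀ hp, mul_one]
  rw [measureReal_def, Measure.addHaar_closedBall_center, ← measureReal_def]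
  induction k using Int.induction_on with
  | zero => simp
  | succ k ih =>
    refine mul_left_cancel₀ hp ?_
    linear_combination (addHaar_real_closedBall_zero_zpow_eq_mul μ k).symm + ih
      + μ.real (closedBall 0 1) * hstep k
  | pred k ih =>
    have hrec := addHaar_real_closedBall_zero_zpow_eq_mul μ (-k - 1)
    have hpow := hstep (-k - 1)
    rw [sub_add_cancel] at hrec hpow
    linear_combination hrec + p * ih - μ.real (closedBall 0 1) * hpow

end Padic

lemma setIntegral_mul_indicator_one {α E : Type*} [MeasurableSpace α] {μ : Measure α}
    [NormedRing E] [NormedSpace ℝ E] [CompleteSpace E] {s t : Set α} (hs : MeasurableSet s)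
    (hst : s ⊆ t) {k : α → E} {c : E} (hk : ∀ y ∈ s, k y = c) :
    ∫ y in t, k y * s.indicator 1 y ∂μ = μ.real s • c := by
  have hintegrand : (fun y => k y * s.indicator 1 y) = s.indicator fun _ => c := by
    ext y
    by_cases hy : y ∈ s
    · simp [hy, hk y hy]
    · simp [hy]
  rw [hintegrand, setIntegral_indicator hs, Set.inter_eq_self_of_subset_right hst,
    setIntegral_const]

section ZunigaKernel

variable {p : ℕ} [Fact p.Prime] {N : ℤ} {V : Finset ℚ_[p]}

lemma pBall_eq_closedBall (N : ℤ) (I : ℚ_[p]) :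
    pBall p N I = closedBall I ((p : ℝ) ^ (-N)) := by
  ext x
  simp [pBall, dist_eq_norm]

open scoped Classical in
lemma indic_eq_ite (hdisj : BallsDisjoint p N V) {I₀ I x : ℚ_[p]} (hI₀ : I₀ ∈ V) (hI : I ∈ V)
    (hx : x ∈ pBall p N I₀) : indic p N I x = if I = I₀ then 1 else 0 := by
  split_ifs with h
  · simp [indic, h, hx]
  · exact Set.indicator_of_notMem (Set.disjoint_right.1 (hdisj hI hI₀ h) hx) _

lemma sum_sum_mul_indic_mul_indic (hdisj : BallsDisjoint p N V) {I₀ J₀ x y : ℚ_[p]}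
    (hI₀ : I₀ ∈ V) (hJ₀ : J₀ ∈ V) (hx : x ∈ pBall p N I₀) (hy : y ∈ pBall p N J₀)
    (c : ℚ_[p] → ℚ_[p] → ℂ) :
    ∑ I ∈ V, ∑ J ∈ V, c I J * indic p N I x * indic p N J y = c I₀ J₀ := by
  classical
  rw [Finset.sum_congr rfl fun I hI => Finset.sum_congr rfl fun J hJ => by
    rw [indic_eq_ite hdisj hI₀ hI hx, indic_eq_ite hdisj hJ₀ hJ hy]]
  simp [hI₀, hJ₀]

lemma zker_eq_of_mem (hdisj : BallsDisjoint p N V) (A : ℚ_[p] → ℚ_[p] → ℂ) {I₀ J₀ x y : ℚ_[p]}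
    (hI₀ : I₀ ∈ V) (hJ₀ : J₀ ∈ V) (hx : x ∈ pBall p N I₀) (hy : y ∈ pBall p N J₀) :
    zker p N V A x y = (p : ℂ) ^ N * A I₀ J₀ := by
  rw [zker, sum_sum_mul_indic_mul_indic hdisj hI₀ hJ₀ hx hy]

lemma lker_eq_of_mem (hdisj : BallsDisjoint p N V) (A : ℚ_[p] → ℚ_[p] → ℂ) {J₀ x y : ℚ_[p]}
    (hJ₀ : J₀ ∈ V) (hx : x ∈ pBall p N J₀) (hy : y ∈ pBall p N J₀) :
    lker p N V A x y = (p : ℂ) ^ N * (A J₀ J₀ - deg p V A J₀) := by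
  rw [lker, sum_sum_mul_indic_mul_indic hdisj hJ₀ hJ₀ hx hy, if_pos rfl]

end ZunigaKernel

theorem lop_ne_lapOp_general (p : ℕ) [Fact p.Prime]
    [MeasurableSpace ℚ_[p]] [BorelSpace ℚ_[p]]
    (μ : Measure ℚ_[p]) [μ.IsAddHaarMeasure]
    (hnorm : μ {x : ℚ_[p] | ‖x‖ ≤ 1} = 1)
    (N : ℤ) (V : Finset ℚ_[p]) (hdisj : BallsDisjoint p N V)
    (A : ℚ_[p] → ℚ_[p] → ℂ) (hsimple : ∀ I ∈ V, A I I = 0)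
    (J₀ : ℚ_[p]) (hJ₀ : J₀ ∈ V) (r : ℤ) (a : ℚ_[p])
    (hsub : pBall p r a ⊆ pBall p N J₀)
    (f : ℚ_[p] → ℂ) (hf : f = (pBall p r a).indicator 1)
    (x₀ : ℚ_[p]) (hx₀ : x₀ ∈ pBall p N J₀ \ pBall p r a) :
    lop p N V A μ f x₀ = -(p : ℂ) ^ (N - r) * deg p V A J₀ ∧
    lapOp p N V A μ f x₀ = 0 ∧
    (deg p V A J₀ ≠ 0 → lop p N V A μ f ≠ lapOp p N V A μ f) := by
  obtain ⟨hx₀J, hx₀B⟩ := hx₀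
  subst hf
  have hp : (p : ℂ) ≠ 0 := by exact_mod_cast (Fact.out : p.Prime).ne_zero
  have hB : MeasurableSet (pBall p r a) := pBall_eq_closedBall r a ▸ measurableSet_closedBall
  have hBK : pBall p r a ⊆ KN p N V := fun y hy => Set.mem_biUnion hJ₀ (hsub hy)
  have hμB : μ.real (pBall p r a) = (p : ℝ) ^ (-r) := by
    have hunit : closedBall (0 : ℚ_[p]) 1 = {x | ‖x‖ ≤ 1} := by ext; simp
    rw [pBall_eq_closedBall, Padic.addHaar_real_closedBall_zpow, hunit, measureReal_def, hnorm,
      ENNReal.toReal_one, mul_one]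
  have hlop :
      lop p N V A μ ((pBall p r a).indicator 1) x₀ = -(p : ℂ) ^ (N - r) * deg p V A J₀ := by
    rw [lop, setIntegral_mul_indicator_one hB hBK
      fun y hy => lker_eq_of_mem hdisj A hJ₀ hx₀J (hsub hy), hμB, hsimple J₀ hJ₀,
      Complex.real_smul, Complex.ofReal_zpow, Complex.ofReal_natCast, sub_eq_add_neg N r,
      zpow_add₀ hp]
    ring
  have hlap : lapOp p N V A μ ((pBall p r a).indicator 1) x₀ = 0 := by
    rw [lapOp, zop, setIntegral_mul_indicator_one hB hBK
      fun y hy => zker_eq_of_mem hdisj A hJ₀ hJ₀ hx₀J (hsub hy), hsimple J₀ hJ₀,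
      Set.indicator_of_notMem hx₀B]
    simp
  refine ⟨hlop, hlap, fun hdeg heq => ?_⟩
  have hx₀eq := congrFun heq x₀
  rw [hlop, hlap] at hx₀eq
  exact mul_ne_zero (neg_ne_zero.2 (zpow_ne_zero _ hp)) hdeg hx₀eq

/-- For a simple graph (`A_{II} = 0`), `J₀ ∈ V`, `r > N` and a ball
`B' = {|x-a|_p ≤ p^{-r}} ⊆ B_{J₀}`, the indicator `f = 1_{B'}` satisfies, for every
`x₀ ∈ B_{J₀} \ B'`:  `ℒf(x₀) = -p^{N-r} γ_{J₀}` while `𝕃f(x₀) = 0`; in particular,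
if `γ_{J₀} ≠ 0`, then `ℒf ≠ 𝕃f`. -/
theorem lop_ne_lapOp (p : ℕ) [Fact p.Prime]
    [MeasurableSpace ℚ_[p]] [BorelSpace ℚ_[p]]
    (μ : Measure ℚ_[p]) [μ.IsAddHaarMeasure]
    (hnorm : μ {x : ℚ_[p] | ‖x‖ ≤ 1} = 1)
    (N : ℤ) (V : Finset ℚ_[p]) (hdisj : BallsDisjoint p N V)
    (A : ℚ_[p] → ℚ_[p] → ℂ) (hsimple : ∀ I ∈ V, A I I = 0)
    (J₀ : ℚ_[p]) (hJ₀ : J₀ ∈ V) (r : ℤ) (hr : N < r) (a : ℚ_[p])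
    (hsub : pBall p r a ⊆ pBall p N J₀)
    (f : ℚ_[p] → ℂ) (hf : f = (pBall p r a).indicator 1)
    (x₀ : ℚ_[p]) (hx₀ : x₀ ∈ pBall p N J₀ \ pBall p r a) :
    lop p N V A μ f x₀ = -(p : ℂ) ^ (N - r) * deg p V A J₀ ∧
    lapOp p N V A μ f x₀ = 0 ∧
    (deg p V A J₀ ≠ 0 → lop p N V A μ f ≠ lapOp p N V A μ f) :=
  lop_ne_lapOp_general p μ hnorm N V hdisj A hsimple J₀ hJ₀ r a hsub f hf x₀ hx₀
end
end

section
/- Let S ⊆ K_N be a compact open set, let I ∈ V, and let ψ : ℚ_p → ℂ be a measurable square-integrable function that vanishes outside a ball B' ⊆ B_I ∩ S and satisfies ∫ ψ dμ = 0. Then ψ satisfies the von Neumann boundary condition: for every x ∈ K_N \ S, ∫_S A(x,y)(ψ(x) − ψ(y)) dμ(y) = 0. -/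
/-! Since the balls `B_J` are disjoint, `A(x, y)` is constant in `y` on `B_I`, which contains the
support of `ψ`; and `ψ(x) = 0` off `S`. The integral is therefore a constant multiple of
`∫ ψ dμ = 0`. -/

open MeasureTheory Set
open scoped ENNReal NNReal

noncomputable section

section

variable {p : ℕ} [Fact p.Prime] {N : ℤ} {V : Finset ℚ_[p]}

theorem indic_eq_zero_of_mem_pBall (hdisj : BallsDisjoint p N V) {I J y : ℚ_[p]} (hI : I ∈ V)
    (hJ : J ∈ V) (hJI : J ≠ I) (hy : y ∈ pBall p N I) : indic p N J y = 0 :=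
  indicator_of_notMem (fun hyJ => disjoint_left.mp (hdisj hJ hI hJI) hyJ hy) _

theorem zker_eq_of_mem_pBall (hdisj : BallsDisjoint p N V) (A : ℚ_[p] → ℚ_[p] → ℂ)
    {I y : ℚ_[p]} (hI : I ∈ V) (hy : y ∈ pBall p N I) (x : ℚ_[p]) :
    zker p N V A x y = (p : ℂ) ^ N * ∑ J ∈ V, A J I * indic p N J x := by
  rw [zker]
  congr 1
  refine Finset.sum_congr rfl fun J _ => ?_
  rw [Finset.sum_eq_single_of_mem I hI fun K hK hKI => by
    rw [indic_eq_zero_of_mem_pBall hdisj hI hK hKI hy, mul_zero]]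
  simp [indic, hy]

end

theorem setIntegral_mul_sub_eq_neg_mul_integral {α : Type*} [MeasurableSpace α] {μ : Measure α}
    {S : Set α} {k ψ : α → ℂ} {c : ℂ} {x : α} (hψx : ψ x = 0) (hψS : ∀ y ∉ S, ψ y = 0)
    (hk : ∀ y, ψ y ≠ 0 → k y = c) :
    ∫ y in S, k y * (ψ x - ψ y) ∂μ = -c * ∫ y, ψ y ∂μ := by
  have hintegrand : ∀ y, k y * (ψ x - ψ y) = -c * ψ y := fun y => by
    by_cases hy : ψ y = 0
    · simp [hy, hψx]
    · simp [hψx, hk y hy]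
  simp_rw [hintegrand, integral_const_mul, setIntegral_eq_integral_of_forall_compl_eq_zero hψS]

theorem kozyrev_satisfies_von_neumann_general (p : ℕ) [Fact p.Prime]
    [MeasurableSpace ℚ_[p]]
    (μ : Measure ℚ_[p])
    (N : ℤ) (V : Finset ℚ_[p]) (hdisj : BallsDisjoint p N V)
    (A : ℚ_[p] → ℚ_[p] → ℂ)
    (S : Set ℚ_[p])
    (I : ℚ_[p]) (hI : I ∈ V)
    (ψ : ℚ_[p] → ℂ)
    (a : ℚ_[p]) (r : ℤ) (hsub : pBall p r a ⊆ pBall p N I ∩ S)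
    (hvanish : ∀ x ∉ pBall p r a, ψ x = 0)
    (hint : ∫ x, ψ x ∂μ = 0) :
    ∀ x ∈ KN p N V \ S, ∫ y in S, zker p N V A x y * (ψ x - ψ y) ∂μ = 0 := by
  intro x hx
  have hψS : ∀ y ∉ S, ψ y = 0 := fun y hy => hvanish y fun h => hy (hsub h).2
  have hψI : ∀ y, ψ y ≠ 0 → y ∈ pBall p N I := fun y hy =>
    by_contra fun hyI => hy (hvanish y fun h => hyI (hsub h).1)
  rw [setIntegral_mul_sub_eq_neg_mul_integral (hψS x hx.2) hψS
    fun y hy => zker_eq_of_mem_pBall hdisj A hI (hψI y hy) x, hint, mul_zero]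

/-- Let `S ⊆ K_N` be compact open, `I ∈ V`, and let `ψ` be a
measurable square-integrable function vanishing outside a ball `B' ⊆ B_I ∩ S` with
`∫ ψ dμ = 0`. Then `ψ` satisfies the von Neumann boundary condition: for every
`x ∈ K_N \ S`, `∫_S A(x,y)(ψ(x) - ψ(y)) dμ(y) = 0`. -/
theorem kozyrev_satisfies_von_neumann (p : ℕ) [Fact p.Prime]
    [MeasurableSpace ℚ_[p]] [BorelSpace ℚ_[p]]
    (μ : Measure ℚ_[p]) [μ.IsAddHaarMeasure]
    (hnorm : μ {x : ℚ_[p] | ‖x‖ ≤ 1} = 1)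
    (N : ℤ) (V : Finset ℚ_[p]) (hdisj : BallsDisjoint p N V)
    (A : ℚ_[p] → ℚ_[p] → ℂ)
    (S : Set ℚ_[p]) (hSsub : S ⊆ KN p N V) (hScompact : IsCompact S) (hSopen : IsOpen S)
    (I : ℚ_[p]) (hI : I ∈ V)
    (ψ : ℚ_[p] → ℂ) (hψmeas : Measurable ψ) (hψL2 : MemLp ψ 2 μ)
    (a : ℚ_[p]) (r : ℤ) (hsub : pBall p r a ⊆ pBall p N I ∩ S)
    (hvanish : ∀ x ∉ pBall p r a, ψ x = 0)
    (hint : ∫ x, ψ x ∂μ = 0) :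
    ∀ x ∈ KN p N V \ S, ∫ y in S, zker p N V A x y * (ψ x - ψ y) ∂μ = 0 :=
  kozyrev_satisfies_von_neumann_general p μ N V hdisj A S I hI ψ a r hsub hvanish hint
end
end

section
/- Suppose each t ↦ A_{IJ}(t) : [0,∞) → ℂ is continuous, fix I ∈ V and s ≥ 0, and let u₀ ∈ L²(K_N) vanish μ-almost everywhere outside the ball B_I with ∫_{K_N} u₀ dμ = 0. Then the curve u : [s,∞) → L²(K_N) defined by u(t) = exp(−∫_s^t γ_I(τ) dτ) · u₀ solves the non-autonomous Cauchy problem: u(s) = u₀ and for every t ≥ s the derivative of u at t (in the L²-norm) equals 𝕃(t)(u(t)). -/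
open MeasureTheory Set
open scoped ENNReal NNReal

noncomputable section

/-! A function `v` supported in `B_I` with mean zero is an eigenfunction of every `𝕃(t)` with
eigenvalue `-γ_I(t)`: the kernel `A(x, ·)` is constant on `B_I`, so `𝒜(t) v = 0`, and `γ(t)`
equals `γ_I(t)` on `B_I`. The Cauchy problem on the line `ℂ u₀` is therefore the scalar equation
`y' = -γ_I(t) y`, solved by `exp (-∫_s^t γ_I)` by the fundamental theorem of calculus. -/

theorem ContinuousOn.integral_hasDerivWithinAt_Ici {E : Type*} [NormedAddCommGroup E]
    [NormedSpace ℝ E] [CompleteSpace E] {f : ℝ → E} {a b : ℝ}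
    (hf : ContinuousOn f (Ici a)) (hb : a ≤ b) :
    HasDerivWithinAt (fun u => ∫ x in a..u, f x) (f b) (Ici a) b := by
  -- Freezing `f` to the left of `a` makes it continuous without changing its integrals from `a`.
  set g : ℝ → E := fun x => f (max a x)
  have hg : Continuous g :=
    hf.comp_continuous (continuous_const.max continuous_id) fun x => le_max_left a x
  have hgf : ∀ u ∈ Ici a, ∫ x in a..u, g x = ∫ x in a..u, f x := fun u hu =>
    intervalIntegral.integral_congr fun x hx => by
      rw [uIcc_of_le hu] at hx
      simp only [g, max_eq_right hx.1]
  have hderiv := (hg.integral_hasStrictDerivAt a b).hasDerivAt.hasDerivWithinAt (s := Ici a)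
  rw [show g b = f b by simp only [g, max_eq_right hb]] at hderiv
  exact hderiv.congr (fun u hu => (hgf u hu).symm) (hgf b hb).symm

theorem ContinuousOn.hasDerivWithinAt_cexp_neg_integral_smul {F : Type*}
    [NormedAddCommGroup F] [NormedSpace ℂ F] {f : ℝ → ℂ} {s t : ℝ}
    (hf : ContinuousOn f (Ici s)) (ht : s ≤ t) (v : F) :
    HasDerivWithinAt (fun τ => Complex.exp (-∫ x in s..τ, f x) • v)
      (-f t • Complex.exp (-∫ x in s..t, f x) • v) (Ici s) t := by
  rw [smul_smul, mul_comm]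
  exact (hf.integral_hasDerivWithinAt_Ici ht).neg.cexp.smul_const v

section Laplacian

variable {p : ℕ} [Fact p.Prime] {N : ℤ} {V : Finset ℚ_[p]}

theorem sum_mul_indic_of_mem_pBall (hdisj : BallsDisjoint p N V) {I y : ℚ_[p]} (hI : I ∈ V)
    (hy : y ∈ pBall p N I) (F : ℚ_[p] → ℂ) : ∑ J ∈ V, F J * indic p N J y = F I := by
  rw [Finset.sum_eq_single_of_mem I hI]
  · rw [indic, indicator_of_mem hy, Pi.one_apply, mul_one]
  · intro J hJ hJI
    have hyJ : y ∉ pBall p N J := fun h => disjoint_left.mp (hdisj hJ hI hJI) h hy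
    rw [indic, indicator_of_notMem hyJ, mul_zero]

theorem degFun_of_mem_pBall (hdisj : BallsDisjoint p N V) {I x : ℚ_[p]} (hI : I ∈ V)
    (hx : x ∈ pBall p N I) (A : ℚ_[p] → ℚ_[p] → ℂ) : degFun p N V A x = deg p V A I :=
  sum_mul_indic_of_mem_pBall hdisj hI hx (deg p V A)

theorem zker_of_mem_pBall (hdisj : BallsDisjoint p N V) {I y : ℚ_[p]} (hI : I ∈ V)
    (hy : y ∈ pBall p N I) (A : ℚ_[p] → ℚ_[p] → ℂ) (x : ℚ_[p]) :
    zker p N V A x y = (p : ℂ) ^ N * ∑ J ∈ V, A J I * indic p N J x := by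
  rw [zker]
  congr 1
  exact Finset.sum_congr rfl fun J _ =>
    sum_mul_indic_of_mem_pBall hdisj hI hy fun K => A J K * indic p N J x

variable [MeasurableSpace ℚ_[p]] {μ : Measure ℚ_[p]}

theorem zop_eq_zero_of_integral_eq_zero (hdisj : BallsDisjoint p N V) {I : ℚ_[p]} (hI : I ∈ V)
    {v : ℚ_[p] → ℂ} (hvanish : ∀ᵐ y ∂μ.restrict (KN p N V), y ∉ pBall p N I → v y = 0)
    (hint : ∫ y in KN p N V, v y ∂μ = 0) (A : ℚ_[p] → ℚ_[p] → ℂ) (x : ℚ_[p]) :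
    zop p N V A μ v x = 0 := by
  have hker : (fun y => zker p N V A x y * v y) =ᵐ[μ.restrict (KN p N V)]
      fun y => ((p : ℂ) ^ N * ∑ J ∈ V, A J I * indic p N J x) * v y := by
    filter_upwards [hvanish] with y hy
    by_cases hyI : y ∈ pBall p N I
    · rw [zker_of_mem_pBall hdisj hI hyI]
    · simp only [hy hyI, mul_zero]
  rw [zop, integral_congr_ae hker, integral_const_mul, hint, mul_zero]

theorem lapOp_ae_eq_neg_deg_smul (hdisj : BallsDisjoint p N V) {I : ℚ_[p]} (hI : I ∈ V)
    {v : ℚ_[p] → ℂ} (hvanish : ∀ᵐ y ∂μ.restrict (KN p N V), y ∉ pBall p N I → v y = 0)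
    (hint : ∫ y in KN p N V, v y ∂μ = 0) (A : ℚ_[p] → ℚ_[p] → ℂ) :
    lapOp p N V A μ v =ᵐ[μ.restrict (KN p N V)] -deg p V A I • v := by
  filter_upwards [hvanish] with x hx
  rw [lapOp, zop_eq_zero_of_integral_eq_zero hdisj hI hvanish hint, zero_sub, Pi.smul_apply,
    smul_eq_mul, neg_mul]
  by_cases hxI : x ∈ pBall p N I
  · rw [degFun_of_mem_pBall hdisj hI hxI]
  · simp only [hx hxI, mul_zero]

end Laplacian

theorem nonautonomous_heat_solution_on_wavelet_part_general (p : ℕ) [Fact p.Prime]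
    [MeasurableSpace ℚ_[p]]
    (μ : Measure ℚ_[p])
    (N : ℤ) (V : Finset ℚ_[p]) (hdisj : BallsDisjoint p N V)
    (A : ℝ → ℚ_[p] → ℚ_[p] → ℂ)
    (hA : ∀ I' ∈ V, ∀ J ∈ V, ContinuousOn (fun t => A t I' J) (Set.Ici 0))
    (I : ℚ_[p]) (hI : I ∈ V) (s : ℝ) (hs : 0 ≤ s)
    (u₀ : ℚ_[p] → ℂ) (hu₀ : MemLp u₀ 2 (μ.restrict (KN p N V)))
    (hvanish : ∀ᵐ x ∂μ, x ∉ pBall p N I → u₀ x = 0)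
    (hint : ∫ x in KN p N V, u₀ x ∂μ = 0)
    (u : ℝ → Lp ℂ 2 (μ.restrict (KN p N V)))
    (hu : ∀ t : ℝ, u t = Complex.exp (-(∫ τ in s..t, deg p V (A τ) I)) • hu₀.toLp u₀) :
    u s = hu₀.toLp u₀ ∧
    ∀ t : ℝ, s ≤ t → ∃ d : Lp ℂ 2 (μ.restrict (KN p N V)),
      HasDerivWithinAt u d (Set.Ici s) t ∧
      ⇑d =ᵐ[μ.restrict (KN p N V)] lapOp p N V (A t) μ ⇑(u t) := by
  have hγ : ContinuousOn (fun τ => deg p V (A τ) I) (Ici s) :=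
    (continuousOn_finsetSum V fun J hJ => hA I hI J hJ).mono (Ici_subset_Ici.2 hs)
  refine ⟨by simp [hu], fun t ht => ⟨-deg p V (A t) I • u t, ?_, ?_⟩⟩
  · rw [show u = _ from funext hu]
    exact hγ.hasDerivWithinAt_cexp_neg_integral_smul ht _
  set c := Complex.exp (-(∫ τ in s..t, deg p V (A τ) I))
  have hut : ⇑(u t) =ᵐ[μ.restrict (KN p N V)] c • u₀ := by
    rw [hu t]
    exact (Lp.coeFn_smul _ _).trans (hu₀.coeFn_toLp.const_smul c)
  refine (Lp.coeFn_smul _ _).trans (lapOp_ae_eq_neg_deg_smul hdisj hI ?_ ?_ (A t)).symm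
  · filter_upwards [hut, ae_restrict_of_ae hvanish] with x hx h0 hxI
    rw [hx, Pi.smul_apply, h0 hxI, smul_zero]
  · rw [integral_congr_ae hut, Pi.smul_def, integral_smul, hint, smul_zero]

/-- Suppose each `t ↦ A_{IJ}(t)` is continuous on `[0,∞)`, fix `I ∈ V`
and `s ≥ 0`, and let `u₀ ∈ L²(K_N)` vanish `μ`-a.e. outside `B_I` with
`∫_{K_N} u₀ dμ = 0`. Then `u(t) = exp(-∫_s^t γ_I(τ) dτ) u₀` solves the non-autonomous
Cauchy problem: `u(s) = u₀` and for every `t ≥ s` the derivative of `u` at `t` (in the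
`L²`-norm) equals `𝕃(t)(u(t))`. -/
theorem nonautonomous_heat_solution_on_wavelet_part (p : ℕ) [Fact p.Prime]
    [MeasurableSpace ℚ_[p]] [BorelSpace ℚ_[p]]
    (μ : Measure ℚ_[p]) [μ.IsAddHaarMeasure]
    (hnorm : μ {x : ℚ_[p] | ‖x‖ ≤ 1} = 1)
    (N : ℤ) (V : Finset ℚ_[p]) (hdisj : BallsDisjoint p N V)
    (A : ℝ → ℚ_[p] → ℚ_[p] → ℂ)
    (hA : ∀ I' ∈ V, ∀ J ∈ V, ContinuousOn (fun t => A t I' J) (Set.Ici 0))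
    (I : ℚ_[p]) (hI : I ∈ V) (s : ℝ) (hs : 0 ≤ s)
    (u₀ : ℚ_[p] → ℂ) (hu₀ : MemLp u₀ 2 (μ.restrict (KN p N V)))
    (hvanish : ∀ᵐ x ∂μ, x ∉ pBall p N I → u₀ x = 0)
    (hint : ∫ x in KN p N V, u₀ x ∂μ = 0)
    (u : ℝ → Lp ℂ 2 (μ.restrict (KN p N V)))
    (hu : ∀ t : ℝ, u t = Complex.exp (-(∫ τ in s..t, deg p V (A τ) I)) • hu₀.toLp u₀) :
    u s = hu₀.toLp u₀ ∧
    ∀ t : ℝ, s ≤ t → ∃ d : Lp ℂ 2 (μ.restrict (KN p N V)),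
      HasDerivWithinAt u d (Set.Ici s) t ∧
      ⇑d =ᵐ[μ.restrict (KN p N V)] lapOp p N V (A t) μ ⇑(u t) :=
  nonautonomous_heat_solution_on_wavelet_part_general p μ N V hdisj A hA I hI s hs u₀ hu₀ hvanish
    hint u hu
end
end
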